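/- arXiv:2412.00738 — 2 statements merged into one kernel-verified Lean document; each statement's English description precedes it below -/
import Mathlib

section
/- For s ∈ (0,1) and any Schwartz function f on ℝⁿ with n ≥ 2, and any multi-index α, the weighted beam transform χ_s f(x,ξ) = ∫₀^∞ t^{2s−1} f(x+tξ) dt satisfies the polynomial growth bound |∂ₓ^α χ_s f(x,ξ)| ≤ C ⟨x⟩^{2s+δ} for every δ > 0, uniformly in ξ ∈ S^{n−1}, where C depends on α, s, δ, f and ⟨x⟩ = (1+|x|²)^{1/2}. -/
open MeasureTheory Set
set_option synthInstance.maxHeartbeats 1000000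
set_option maxHeartbeats 4000000

section FracBeamAux
variable {E : Type*} [NormedAddCommGroup E] [NormedSpace ℝ E]

lemma fracBeam_peetre (x v : E) : 1 + ‖v‖ ≤ (1 + ‖x‖) * (1 + ‖x + v‖) := by
  have h : ‖v‖ ≤ ‖x‖ + ‖x + v‖ := by
    calc ‖v‖ = ‖x + v - x‖ := by rw [add_sub_cancel_left]
    _ ≤ ‖x + v‖ + ‖x‖ := norm_sub_le _ _
    _ = ‖x‖ + ‖x + v‖ := by ring
  nlinarith [norm_nonneg x, norm_nonneg (x + v)]

lemma fracBeam_integrable {s : ℝ} (hs0 : 0 < s) (hs1 : s < 1) :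
    IntegrableOn (fun t : ℝ => t ^ (2*s-1) / (1+t)^2) (Ioi (0:ℝ)) := by
  have hcont : ContinuousOn (fun t : ℝ => t ^ (2*s-1) / (1+t)^2) (Ioi (0:ℝ)) := by
    apply ContinuousOn.div
    · exact continuousOn_id.rpow_const (fun t ht => Or.inl (ne_of_gt ht))
    · fun_prop
    · intro t ht
      have : (0:ℝ) < t := ht
      positivity
  rw [← Ioc_union_Ioi_eq_Ioi (zero_le_one (α := ℝ))]
  apply IntegrableOn.union
  · have hint : IntegrableOn (fun t : ℝ => t ^ (2*s-1)) (Ioc (0:ℝ) 1) := by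
      rw [← intervalIntegrable_iff_integrableOn_Ioc_of_le zero_le_one]
      exact intervalIntegral.intervalIntegrable_rpow' (by linarith)
    apply Integrable.mono hint
    · exact (hcont.mono Ioc_subset_Ioi_self).aestronglyMeasurable measurableSet_Ioc
    · filter_upwards [ae_restrict_mem measurableSet_Ioc] with t ht
      have ht0 : (0:ℝ) < t := ht.1
      have h1 : (1:ℝ) ≤ (1+t)^2 := by nlinarith
      rw [Real.norm_eq_abs, Real.norm_eq_abs, abs_of_nonneg (Real.rpow_nonneg ht0.le _),
        abs_of_nonneg (by positivity)]
      rw [div_le_iff₀ (by positivity)]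
      nlinarith [Real.rpow_nonneg ht0.le (2*s-1)]
  · have hint : IntegrableOn (fun t : ℝ => t ^ (2*s-3)) (Ioi (1:ℝ)) :=
      integrableOn_Ioi_rpow_of_lt (by linarith) zero_lt_one
    apply Integrable.mono hint
    · exact (hcont.mono (Ioi_subset_Ioi zero_le_one)).aestronglyMeasurable measurableSet_Ioi
    · filter_upwards [ae_restrict_mem measurableSet_Ioi] with t ht
      have ht1 : (1:ℝ) < t := ht
      have ht0 : (0:ℝ) < t := by linarith
      rw [Real.norm_eq_abs, Real.norm_eq_abs, abs_of_nonneg (Real.rpow_nonneg ht0.le _),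
        abs_of_nonneg (by positivity)]
      have key : t ^ (2*s-3) = t ^ (2*s-1) / t^2 := by
        rw [eq_div_iff (by positivity), ← Real.rpow_natCast t 2, ← Real.rpow_add ht0]
        norm_num
        ring_nf
      rw [key]
      apply div_le_div_of_nonneg_left (Real.rpow_nonneg ht0.le _) (by positivity)
      nlinarith

lemma fracBeam_schwartz_bound (f : SchwartzMap E ℝ) (k : ℕ) :
    ∃ M, 0 ≤ M ∧ ∀ y : E, ‖iteratedFDeriv ℝ k f y‖ ≤ M / (1 + ‖y‖)^2 := by
  refine ⟨2 ^ 2 * (Finset.Iic ((2:ℕ), k)).sup (fun m => SchwartzMap.seminorm ℝ m.1 m.2) f,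
    by positivity, fun y => ?_⟩
  have h := SchwartzMap.one_add_le_sup_seminorm_apply (𝕜 := ℝ) (m := ((2:ℕ), k))
    le_rfl le_rfl f y
  have hy : (0:ℝ) < (1 + ‖y‖)^2 := by positivity
  rw [le_div_iff₀ hy]
  calc ‖iteratedFDeriv ℝ k (⇑f) y‖ * (1 + ‖y‖)^2
      = (1 + ‖y‖)^2 * ‖iteratedFDeriv ℝ k (⇑f) y‖ := by ring
    _ ≤ _ := by exact_mod_cast h


lemma fracBeam_q {s : ℝ} (f : SchwartzMap E ℝ) (ξ : E) (hξ : ‖ξ‖ = 1) (m : ℕ) :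
    ∃ M, 0 ≤ M ∧ ∀ (x : E) (t : ℝ), 0 < t →
      t ^ (2*s-1) * ‖iteratedFDeriv ℝ m (⇑f) (x + t • ξ)‖ ≤
        (M * (1+‖x‖)^2) * (t ^ (2*s-1) / (1+t)^2) := by
  obtain ⟨M, hM0, hM⟩ := fracBeam_schwartz_bound f m
  refine ⟨M, hM0, fun x t ht => ?_⟩
  have hp : 1 + t ≤ (1+‖x‖) * (1+‖x + t • ξ‖) := by
    have := fracBeam_peetre x (t • ξ)
    rwa [norm_smul, hξ, mul_one, Real.norm_eq_abs, abs_of_pos ht] at this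
  have h2 : (1+t)^2 ≤ ((1+‖x‖) * (1+‖x + t • ξ‖))^2 :=
    pow_le_pow_left₀ (by positivity) hp 2
  have key : M / (1+‖x + t • ξ‖)^2 ≤ M * (1+‖x‖)^2 / (1+t)^2 := by
    rw [div_le_div_iff₀ (by positivity) (by positivity)]
    nlinarith [norm_nonneg (x + t • ξ), norm_nonneg x]
  calc t ^ (2*s-1) * ‖iteratedFDeriv ℝ m (⇑f) (x + t • ξ)‖
      ≤ t ^ (2*s-1) * (M * (1+‖x‖)^2 / (1+t)^2) :=
        mul_le_mul_of_nonneg_left ((hM _).trans key) (Real.rpow_nonneg ht.le _)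
    _ = (M * (1+‖x‖)^2) * (t ^ (2*s-1) / (1+t)^2) := by ring

lemma fracBeam_meas (s : ℝ) (f : SchwartzMap E ℝ) (ξ : E) (m : ℕ) (x : E) :
    AEStronglyMeasurable
      (fun t : ℝ => t ^ (2*s-1) • iteratedFDeriv ℝ m (⇑f) (x + t • ξ))
      (volume.restrict (Ioi 0)) := by
  have hsm : ContDiff ℝ (⊤:ℕ∞) (iteratedFDeriv ℝ m (⇑f)) :=
    (f.smooth ⊤).iteratedFDeriv_right (by exact_mod_cast le_top)
  apply ContinuousOn.aestronglyMeasurable _ measurableSet_Ioi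
  apply ContinuousOn.smul (continuousOn_id.rpow_const fun t ht => Or.inl (ne_of_gt ht))
  exact (hsm.continuous.comp (by continuity)).continuousOn

lemma fracBeam_intOn {s : ℝ} (hs0 : 0 < s) (hs1 : s < 1) (f : SchwartzMap E ℝ)
    (ξ : E) (hξ : ‖ξ‖ = 1) (m : ℕ) (x : E) :
    IntegrableOn (fun t : ℝ => t ^ (2*s-1) • iteratedFDeriv ℝ m (⇑f) (x + t • ξ))
      (Ioi 0) := by
  obtain ⟨M, hM0, hM⟩ := fracBeam_q f ξ hξ m (s := s)
  apply Integrable.mono (((fracBeam_integrable hs0 hs1).const_mul (M * (1+‖x‖)^2)))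
    (fracBeam_meas s f ξ m x)
  filter_upwards [ae_restrict_mem measurableSet_Ioi] with t ht
  have ht0 : (0:ℝ) < t := ht
  have hns := norm_smul (t ^ (2*s-1)) (iteratedFDeriv ℝ m (⇑f) (x + t • ξ))
  rw [hns, Real.norm_eq_abs, abs_of_nonneg (Real.rpow_nonneg ht0.le _),
    Real.norm_eq_abs, abs_of_nonneg (by positivity)]
  exact hM x t ht0

lemma fracBeam_key {s : ℝ} (hs0 : 0 < s) (hs1 : s < 1)
    (f : SchwartzMap E ℝ) (ξ : E) (hξ : ‖ξ‖ = 1) (k : ℕ) (x : E) :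
    iteratedFDeriv ℝ k (fun y => ∫ t in Ioi (0:ℝ), t ^ (2*s-1) * f (y + t • ξ)) x
      = ∫ t in Ioi (0:ℝ), t ^ (2*s-1) • iteratedFDeriv ℝ k (⇑f) (x + t • ξ) := by
  have hsm : ∀ m : ℕ, ContDiff ℝ (⊤:ℕ∞) (iteratedFDeriv ℝ m (⇑f)) := fun m =>
    (f.smooth ⊤).iteratedFDeriv_right (by exact_mod_cast le_top)
  have hq := fun m => fracBeam_q f ξ hξ m (s := s)
  have hmeas := fracBeam_meas s f ξ
  have hint := fun m x => fracBeam_intOn hs0 hs1 f ξ hξ m x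
  induction k generalizing x with
  | zero =>
    rw [iteratedFDeriv_zero_eq_comp]
    calc (continuousMultilinearCurryFin0 ℝ E ℝ).symm
          (∫ t in Ioi (0:ℝ), t ^ (2*s-1) * f (x + t • ξ))
        = ∫ t in Ioi (0:ℝ), (continuousMultilinearCurryFin0 ℝ E ℝ).symm
            (t ^ (2*s-1) * f (x + t • ξ)) :=
          ((continuousMultilinearCurryFin0 ℝ E ℝ).symm.toLinearIsometry.integral_comp_comm
            _).symm
      _ = ∫ t in Ioi (0:ℝ), t ^ (2*s-1) • iteratedFDeriv ℝ 0 (⇑f) (x + t • ξ) := by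
          refine integral_congr_ae (Filter.Eventually.of_forall fun t => ?_)
          simp only [iteratedFDeriv_zero_eq_comp, Function.comp_apply]
          exact _root_.map_smul ((continuousMultilinearCurryFin0 ℝ E ℝ).symm.toLinearIsometry)
            (t ^ (2*s-1)) (f (x + t • ξ))
  | succ k ih =>
    have htrans : ∀ (t : ℝ) (y : E), HasFDerivAt (fun z => iteratedFDeriv ℝ k (⇑f) (z + t • ξ))
        (fderiv ℝ (iteratedFDeriv ℝ k (⇑f)) (y + t • ξ)) y := by
      intro t y
      have h := ((hsm k).differentiable (by simp) (y + t • ξ)).hasFDerivAt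
      have := h.comp y ((hasFDerivAt_id y).add_const (t • ξ))
      exact this
    have hg' : HasFDerivAt
        (fun z => ∫ t in Ioi (0:ℝ), t ^ (2*s-1) • iteratedFDeriv ℝ k (⇑f) (z + t • ξ))
        (∫ t in Ioi (0:ℝ), t ^ (2*s-1) • fderiv ℝ (iteratedFDeriv ℝ k (⇑f)) (x + t • ξ)) x := by
      obtain ⟨M, hM0, hM⟩ := hq (k+1)
      apply hasFDerivAt_integral_of_dominated_of_fderiv_le
        (F' := fun y t => t ^ (2*s-1) • fderiv ℝ (iteratedFDeriv ℝ k (⇑f)) (y + t • ξ))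
        (bound := fun t => (M * (2+‖x‖)^2) * (t ^ (2*s-1) / (1+t)^2)) (Metric.ball_mem_nhds x zero_lt_one)
      · filter_upwards with y using hmeas k y
      · exact hint k x
      · apply ContinuousOn.aestronglyMeasurable _ measurableSet_Ioi
        apply ContinuousOn.smul (continuousOn_id.rpow_const fun t ht => Or.inl (ne_of_gt ht))
        have hc : Continuous (fderiv ℝ (iteratedFDeriv ℝ k (⇑f))) := by
          rw [fderiv_iteratedFDeriv]
          exact (LinearIsometryEquiv.continuous _).comp (hsm (k+1)).continuous
        exact (hc.comp (by continuity)).continuousOn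
      · filter_upwards [ae_restrict_mem measurableSet_Ioi] with t ht y hy
        have ht0 : (0:ℝ) < t := ht
        have hns := @norm_smul ℝ _ _ _ _ NormedSpace.toNormSMulClass (t ^ (2*s-1)) (fderiv ℝ (iteratedFDeriv ℝ k (⇑f)) (y + t • ξ))
        rw [hns, Real.norm_eq_abs, abs_of_nonneg (Real.rpow_nonneg ht0.le _),
          norm_fderiv_iteratedFDeriv]
        have h1 := hM y t ht0
        have h2 : (1 + ‖y‖ : ℝ) ≤ 2 + ‖x‖ := by
          have : ‖y‖ ≤ ‖x‖ + 1 := by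
            have := mem_ball_iff_norm.mp hy
            have h3 : ‖y‖ - ‖x‖ ≤ ‖y - x‖ := norm_sub_norm_le y x
            linarith
          linarith
        refine h1.trans ?_
        apply mul_le_mul_of_nonneg_right _ (by positivity)
        have : (1+‖y‖)^2 ≤ (2+‖x‖)^2 := pow_le_pow_left₀ (by positivity) h2 2
        nlinarith
      · exact ((fracBeam_integrable hs0 hs1).const_mul _)
      · filter_upwards [ae_restrict_mem measurableSet_Ioi] with t ht y hy
        exact (htrans t y).const_smul (t ^ (2*s-1))
    rw [iteratedFDeriv_succ_eq_comp_left, Function.comp_apply]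
    have hfe : fderiv ℝ (iteratedFDeriv ℝ k
        (fun y => ∫ t in Ioi (0:ℝ), t ^ (2*s-1) * f (y + t • ξ))) x
        = ∫ t in Ioi (0:ℝ), t ^ (2*s-1) • fderiv ℝ (iteratedFDeriv ℝ k (⇑f)) (x + t • ξ) := by
      have heq : iteratedFDeriv ℝ k (fun y => ∫ t in Ioi (0:ℝ), t ^ (2*s-1) * f (y + t • ξ))
          = fun z => ∫ t in Ioi (0:ℝ), t ^ (2*s-1) • iteratedFDeriv ℝ k (⇑f) (z + t • ξ) :=
        funext fun z => ih z
      rw [heq]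
      exact hg'.fderiv
    rw [hfe]
    calc (continuousMultilinearCurryLeftEquiv ℝ (fun _ : Fin (k + 1) => E) ℝ).symm
          (∫ t in Ioi (0:ℝ), t ^ (2*s-1) • fderiv ℝ (iteratedFDeriv ℝ k (⇑f)) (x + t • ξ))
        = ∫ t in Ioi (0:ℝ), (continuousMultilinearCurryLeftEquiv ℝ (fun _ : Fin (k + 1) => E) ℝ).symm
            (t ^ (2*s-1) • fderiv ℝ (iteratedFDeriv ℝ k (⇑f)) (x + t • ξ)) :=
          (LinearIsometry.integral_comp_comm (𝕜 := ℝ) (E := E →L[ℝ] E [×k]→L[ℝ] ℝ)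
            (F := ContinuousMultilinearMap ℝ (fun _ : Fin (k + 1) => E) ℝ)
            (continuousMultilinearCurryLeftEquiv ℝ (fun _ : Fin (k + 1) => E) ℝ).symm.toLinearIsometry
            (fun t : ℝ => t ^ (2*s-1) • fderiv ℝ (iteratedFDeriv ℝ k (⇑f)) (x + t • ξ))).symm
      _ = ∫ t in Ioi (0:ℝ), t ^ (2*s-1) • iteratedFDeriv ℝ (k+1) (⇑f) (x + t • ξ) := by
          have hcurry : ∀ y : E,
              (continuousMultilinearCurryLeftEquiv ℝ (fun _ : Fin (k + 1) => E) ℝ).symm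
                (fderiv ℝ (iteratedFDeriv ℝ k (⇑f)) y) = iteratedFDeriv ℝ (k+1) (⇑f) y :=
            fun y => rfl
          refine integral_congr_ae (Filter.Eventually.of_forall fun t => ?_)
          beta_reduce
          rw [← hcurry]
          exact _root_.map_smul _ _ _

end FracBeamAux

/-- Polynomial growth bound for the derivatives (of any order `k`, i.e. covering all
multi-indices `α` with `|α| = k`) of the fractional weighted beam transform
`χ_s f(x,ξ) = ∫₀^∞ t^{2s-1} f(x+tξ) dt`, uniformly over unit directions `ξ`:
`‖∂ₓ^α χ_s f(x,ξ)‖ ≤ C ⟨x⟩^{2s+δ}` for every `δ > 0`. -/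
theorem frac_beam_transform_deriv_growth
    (n : ℕ) (hn : 2 ≤ n) (s : ℝ) (hs : s ∈ Set.Ioo (0 : ℝ) 1)
    (f : SchwartzMap (EuclideanSpace ℝ (Fin n)) ℝ)
    (k : ℕ) (δ : ℝ) (hδ : 0 < δ) :
    ∃ C > 0, ∀ ξ : EuclideanSpace ℝ (Fin n), ‖ξ‖ = 1 →
      ∀ x : EuclideanSpace ℝ (Fin n),
        ‖iteratedFDeriv ℝ k
            (fun y => ∫ t in Set.Ioi (0 : ℝ), t ^ (2 * s - 1) * f (y + t • ξ)) x‖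
          ≤ C * (1 + ‖x‖ ^ 2) ^ ((2 * s + δ) / 2) := by
  obtain ⟨hs0, hs1⟩ := hs
  obtain ⟨M, hM0, hM⟩ := fracBeam_schwartz_bound f k
  have hs2 : (0:ℝ) < 2*s := by linarith
  have hs3 : (0:ℝ) < 2-2*s := by linarith
  refine ⟨M * 8 / (2*s) + 4*M/(2-2*s) + 1, by positivity, fun ξ hξ x => ?_⟩
  rw [fracBeam_key hs0 hs1 f ξ hξ k x]
  set R : ℝ := 1 + 2*‖x‖ with hRdef
  have hR1 : (1:ℝ) ≤ R := by have := norm_nonneg x; simp only [hRdef]; linarith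
  have hR0 : (0:ℝ) < R := by linarith
  have hx2 : 2*‖x‖ ≤ R := by simp only [hRdef]; linarith
  set ψ : ℝ → ℝ := fun t => ‖t ^ (2*s-1) • iteratedFDeriv ℝ k (⇑f) (x + t • ξ)‖ with hψdef
  have hψeq : ∀ t : ℝ, 0 < t →
      ψ t = t ^ (2*s-1) * ‖iteratedFDeriv ℝ k (⇑f) (x + t • ξ)‖ := by
    intro t ht
    simp only [hψdef]
    rw [norm_smul (t ^ (2*s-1)) (iteratedFDeriv ℝ k (⇑f) (x + t • ξ)),
      Real.norm_eq_abs, abs_of_nonneg (Real.rpow_nonneg ht.le _)]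
  have hψint : IntegrableOn ψ (Set.Ioi 0) :=
    (fracBeam_intOn hs0 hs1 f ξ hξ k x).norm
  have step0 : ‖∫ t in Set.Ioi (0:ℝ), t ^ (2*s-1) • iteratedFDeriv ℝ k (⇑f) (x + t • ξ)‖
      ≤ ∫ t in Set.Ioi (0:ℝ), ψ t := norm_integral_le_integral_norm _
  -- split the integral
  have hsplit : ∫ t in Set.Ioi (0:ℝ), ψ t
      = (∫ t in Set.Ioc (0:ℝ) R, ψ t) + ∫ t in Set.Ioi R, ψ t := by
    rw [← Set.Ioc_union_Ioi_eq_Ioi hR0.le]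
    exact setIntegral_union (Set.Ioc_disjoint_Ioi le_rfl) measurableSet_Ioi
      (hψint.mono_set (by rw [← Set.Ioc_union_Ioi_eq_Ioi hR0.le]; exact Set.subset_union_left))
      (hψint.mono_set (by rw [← Set.Ioc_union_Ioi_eq_Ioi hR0.le]; exact Set.subset_union_right))
  -- first piece
  have hrint : IntegrableOn (fun t : ℝ => M * t ^ (2*s-1)) (Set.Ioc 0 R) := by
    have hbase : IntegrableOn (fun t : ℝ => t ^ (2*s-1)) (Set.Ioc 0 R) := by
      rw [← intervalIntegrable_iff_integrableOn_Ioc_of_le hR0.le]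
      exact intervalIntegral.intervalIntegrable_rpow' (by linarith)
    exact hbase.const_mul M
  have piece1 : (∫ t in Set.Ioc (0:ℝ) R, ψ t) ≤ M * (R ^ (2*s) / (2*s)) := by
    have h1 : (∫ t in Set.Ioc (0:ℝ) R, ψ t) ≤ ∫ t in Set.Ioc (0:ℝ) R, M * t ^ (2*s-1) := by
      apply setIntegral_mono_on
        (hψint.mono_set (by rw [← Set.Ioc_union_Ioi_eq_Ioi hR0.le]; exact Set.subset_union_left))
        hrint measurableSet_Ioc
      intro t ht
      rw [hψeq t ht.1]
      have hb : ‖iteratedFDeriv ℝ k (⇑f) (x + t • ξ)‖ ≤ M := by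
        refine (hM _).trans ?_
        apply div_le_self hM0
        nlinarith [norm_nonneg (x + t • ξ)]
      calc t ^ (2*s-1) * ‖iteratedFDeriv ℝ k (⇑f) (x + t • ξ)‖
          ≤ t ^ (2*s-1) * M := mul_le_mul_of_nonneg_left hb (Real.rpow_nonneg ht.1.le _)
        _ = M * t ^ (2*s-1) := by ring
    have h2 : ∫ t in Set.Ioc (0:ℝ) R, M * t ^ (2*s-1) = M * (R ^ (2*s) / (2*s)) := by
      rw [integral_const_mul]
      congr 1
      rw [← intervalIntegral.integral_of_le hR0.le,
        integral_rpow (Or.inl (by linarith : (-1:ℝ) < 2*s-1))]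
      have he : 2*s-1+1 = 2*s := by ring
      rw [he, Real.zero_rpow (by positivity)]
      ring
    linarith
  -- second piece
  have hr2int : IntegrableOn (fun t : ℝ => (4*M) * t ^ (2*s-3)) (Set.Ioi R) :=
    (integrableOn_Ioi_rpow_of_lt (by linarith) hR0).const_mul _
  have piece2 : (∫ t in Set.Ioi R, ψ t) ≤ 4*M/(2-2*s) := by
    have h1 : (∫ t in Set.Ioi R, ψ t) ≤ ∫ t in Set.Ioi R, (4*M) * t ^ (2*s-3) := by
      apply setIntegral_mono_on
        (hψint.mono_set (fun t ht => lt_trans hR0 ht))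
        hr2int measurableSet_Ioi
      intro t ht
      have htR : R < t := ht
      have ht0 : (0:ℝ) < t := lt_trans hR0 htR
      rw [hψeq t ht0]
      have hlow : t/2 ≤ ‖x + t • ξ‖ := by
        have h4 : ‖t • ξ‖ ≤ ‖x + t • ξ‖ + ‖x‖ := by
          calc ‖t • ξ‖ = ‖(x + t • ξ) - x‖ := by congr 1; abel
            _ ≤ ‖x + t • ξ‖ + ‖x‖ := norm_sub_le _ _
        have h5 : ‖t • ξ‖ = t := by
          rw [norm_smul, hξ, mul_one, Real.norm_eq_abs, abs_of_pos ht0]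
        have h6 : 2*‖x‖ ≤ R := hx2
        nlinarith
      have hb : ‖iteratedFDeriv ℝ k (⇑f) (x + t • ξ)‖ ≤ 4*M/t^2 := by
        refine (hM _).trans ?_
        rw [div_le_div_iff₀ (by positivity) (by positivity)]
        have hsq : (t/2)^2 ≤ (1+‖x + t • ξ‖)^2 :=
          pow_le_pow_left₀ (by positivity) (by linarith [norm_nonneg (x + t • ξ)]) 2
        nlinarith [mul_le_mul_of_nonneg_left hsq hM0]
      have hkey : t ^ (2*s-3) = t ^ (2*s-1) / t^2 := by
        rw [eq_div_iff (by positivity), ← Real.rpow_natCast t 2, ← Real.rpow_add ht0]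
        norm_num
        ring_nf
      calc t ^ (2*s-1) * ‖iteratedFDeriv ℝ k (⇑f) (x + t • ξ)‖
          ≤ t ^ (2*s-1) * (4*M/t^2) :=
            mul_le_mul_of_nonneg_left hb (Real.rpow_nonneg ht0.le _)
        _ = (4*M) * t ^ (2*s-3) := by rw [hkey]; ring
    have h2 : ∫ t in Set.Ioi R, (4*M) * t ^ (2*s-3) = (4*M) * (-R ^ (2*s-2) / (2*s-2)) := by
      rw [integral_const_mul]
      congr 1
      have := integral_Ioi_rpow_of_lt (a := 2*s-3) (by linarith) hR0
      rw [this, show (2*s-3+1 : ℝ) = 2*s-2 by ring]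
    have hRle : R ^ (2*s-2) ≤ 1 :=
      Real.rpow_le_one_of_one_le_of_nonpos hR1 (by linarith)
    have hRpos : (0:ℝ) ≤ R ^ (2*s-2) := Real.rpow_nonneg hR0.le _
    have h3 : (4*M) * (-R ^ (2*s-2) / (2*s-2)) ≤ 4*M/(2-2*s) := by
      have he : -R ^ (2*s-2) / (2*s-2) = R ^ (2*s-2) / (2-2*s) := by
        rw [div_eq_div_iff (by linarith : (2*s-2:ℝ) ≠ 0) hs3.ne']
        ring
      rw [he, ← mul_div_assoc, div_le_div_iff₀ hs3 hs3]
      nlinarith [mul_le_mul_of_nonneg_left hRle (by positivity : (0:ℝ) ≤ 4*M*(2-2*s))]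
    linarith
  -- convert R^(2s) to the bracket
  set P : ℝ := (1 + ‖x‖ ^ 2) ^ ((2 * s + δ) / 2) with hPdef
  have hP1 : (1:ℝ) ≤ P := by
    apply Real.one_le_rpow (by nlinarith [sq_nonneg ‖x‖]) (by positivity)
  have hR2s : R ^ (2*s) ≤ 8 * P := by
    have h8 : R^2 ≤ 8 * (1 + ‖x‖^2) := by simp only [hRdef]; nlinarith [sq_nonneg ‖x‖, sq_nonneg (1-2*‖x‖)]
    calc R ^ (2*s) = (R^2) ^ s := by
          rw [← Real.rpow_natCast R 2, ← Real.rpow_mul hR0.le]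
          norm_num
      _ ≤ (8 * (1 + ‖x‖^2)) ^ s := Real.rpow_le_rpow (by positivity) h8 hs0.le
      _ = 8 ^ s * (1 + ‖x‖^2) ^ s := Real.mul_rpow (by norm_num) (by positivity)
      _ ≤ 8 * P := by
          apply mul_le_mul
          · calc (8:ℝ) ^ s ≤ 8 ^ (1:ℝ) :=
                Real.rpow_le_rpow_of_exponent_le (by norm_num) hs1.le
              _ = 8 := Real.rpow_one 8
          · exact Real.rpow_le_rpow_of_exponent_le (by nlinarith [sq_nonneg ‖x‖]) (by linarith)
          · positivity
          · norm_num
  have hA : (0:ℝ) ≤ M/(2*s) := by positivity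
  have hB : (0:ℝ) ≤ 4*M/(2-2*s) := by
    have : (0:ℝ) < 2-2*s := by linarith
    positivity
  have hfin : M * (R ^ (2*s) / (2*s)) + 4*M/(2-2*s)
      ≤ (M * 8 / (2*s) + 4*M/(2-2*s) + 1) * P := by
    have e1 : M * (R ^ (2*s) / (2*s)) = (M/(2*s)) * R ^ (2*s) := by ring
    have e2 : (M/(2*s)) * R ^ (2*s) ≤ (M/(2*s)) * (8*P) :=
      mul_le_mul_of_nonneg_left hR2s hA
    have e3 : 4*M/(2-2*s) ≤ (4*M/(2-2*s)) * P := le_mul_of_one_le_right hB hP1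
    have e4 : (M/(2*s)) * (8*P) = (M * 8 / (2*s)) * P := by ring
    nlinarith [hP1]
  calc ‖∫ t in Set.Ioi (0:ℝ), t ^ (2*s-1) • iteratedFDeriv ℝ k (⇑f) (x + t • ξ)‖
      ≤ ∫ t in Set.Ioi (0:ℝ), ψ t := step0
    _ = (∫ t in Set.Ioc (0:ℝ) R, ψ t) + ∫ t in Set.Ioi R, ψ t := hsplit
    _ ≤ M * (R ^ (2*s) / (2*s)) + 4*M/(2-2*s) := add_le_add piece1 piece2
    _ ≤ (M * 8 / (2*s) + 4*M/(2-2*s) + 1) * P := hfin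
end

section
/- Let k ≥ 0 and m ≥ 0 be integers, s > 0 with 2s < n, and f = (f_{j₁⋯j_m}) a Schwartz symmetric m-tensor field on ℝⁿ. Then the averaged transform ∫_{S^{n−1}} ξ^{i₁}⋯ξ^{i_k} (∫₀^∞ t^{2s−1} f_{j₁⋯j_m}(x+tξ) ξ^{j₁}⋯ξ^{j_m} dt) dS_ξ equals (−1)^{m+k} times the convolution of f_{j₁⋯j_m} with the kernel K(x) = |x|^{2s−n−m−k} x^{i₁}⋯x^{i_k} x^{j₁}⋯x^{j_m} (summation over repeated indices). -/
open MeasureTheory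
open scoped ENNReal NNReal
set_option maxHeartbeats 1000000
set_option maxRecDepth 8000

section PolarAux

open Measure Set Metric

variable {E : Type*} [NormedAddCommGroup E] [NormedSpace ℝ E] [MeasurableSpace E]
  [BorelSpace E] [Nontrivial E] [FiniteDimensional ℝ E]
  (μ : Measure E) [μ.IsAddHaarMeasure]

private lemma polar_comp_eq (g : E → ℝ) (y : ({0}ᶜ : Set E)) :
    g ((((homeomorphUnitSphereProd E y).2 : ℝ)) • ((homeomorphUnitSphereProd E y).1 : E))
      = g (y : E) := by
  rw [homeomorphUnitSphereProd_apply_snd_coe, homeomorphUnitSphereProd_apply_fst_coe,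
    smul_inv_smul₀ (norm_ne_zero_iff.2 y.2)]

private lemma polar_comp_eq' (g : E → ℝ≥0∞) (y : ({0}ᶜ : Set E)) :
    g ((((homeomorphUnitSphereProd E y).2 : ℝ)) • ((homeomorphUnitSphereProd E y).1 : E))
      = g (y : E) := by
  rw [homeomorphUnitSphereProd_apply_snd_coe, homeomorphUnitSphereProd_apply_fst_coe,
    smul_inv_smul₀ (norm_ne_zero_iff.2 y.2)]

theorem my_lintegral_polar (g : E → ℝ≥0∞) (hg : Measurable g) :
    ∫⁻ y, g y ∂μ = ∫⁻ ξ : sphere (0:E) 1,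
        (∫⁻ r in Ioi (0:ℝ), ENNReal.ofReal (r ^ (Module.finrank ℝ E - 1)) * g (r • (ξ : E)))
          ∂μ.toSphere := by
  have hs : MeasurableSet ({0}ᶜ : Set E) := (measurableSet_singleton 0).compl
  have hmeas : Measurable fun p : sphere (0:E) 1 × Ioi (0:ℝ) => g ((p.2 : ℝ) • (p.1 : E)) :=
    hg.comp (((continuous_subtype_val.comp continuous_snd).smul
      (continuous_subtype_val.comp continuous_fst)).measurable)
  calc ∫⁻ y, g y ∂μ
      = ∫⁻ y : ({0}ᶜ : Set E), g (y : E) ∂(μ.comap (↑)) := by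
        rw [lintegral_subtype_comap hs, restrict_compl_singleton]
    _ = ∫⁻ p : sphere (0:E) 1 × Ioi (0:ℝ), g ((p.2 : ℝ) • (p.1 : E))
          ∂(μ.toSphere.prod (volumeIoiPow (Module.finrank ℝ E - 1))) := by
        rw [← μ.measurePreserving_homeomorphUnitSphereProd.lintegral_comp_emb
          (Homeomorph.measurableEmbedding _) (fun p => g ((p.2 : ℝ) • (p.1 : E)))]
        exact lintegral_congr fun y => (polar_comp_eq' g y).symm
    _ = ∫⁻ ξ : sphere (0:E) 1, (∫⁻ r : Ioi (0:ℝ), g ((r : ℝ) • (ξ : E))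
          ∂(volumeIoiPow (Module.finrank ℝ E - 1))) ∂μ.toSphere :=
        lintegral_prod _ hmeas.aemeasurable
    _ = _ := by
        refine lintegral_congr fun ξ => ?_
        rw [volumeIoiPow, lintegral_withDensity_eq_lintegral_mul _
          ((measurable_subtype_coe.pow_const _).ennreal_ofReal)
          (show Measurable fun r : Ioi (0:ℝ) => g ((r : ℝ) • (ξ : E)) from
            hg.comp (measurable_subtype_coe.smul_const _))]
        rw [← lintegral_subtype_comap measurableSet_Ioi
          (fun r : ℝ => ENNReal.ofReal (r ^ (Module.finrank ℝ E - 1)) * g (r • (ξ : E)))]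
        rfl

theorem my_integrable_polar_prod {g : E → ℝ} (hg : Integrable g μ) :
    Integrable (fun p : sphere (0:E) 1 × Ioi (0:ℝ) => g ((p.2 : ℝ) • (p.1 : E)))
      (μ.toSphere.prod (volumeIoiPow (Module.finrank ℝ E - 1))) := by
  have hs : MeasurableSet ({0}ᶜ : Set E) := (measurableSet_singleton 0).compl
  rw [← μ.measurePreserving_homeomorphUnitSphereProd.integrable_comp_emb
    (Homeomorph.measurableEmbedding _)]
  have hcomp : ((fun p : sphere (0:E) 1 × Ioi (0:ℝ) => g ((p.2 : ℝ) • (p.1 : E)))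
      ∘ (homeomorphUnitSphereProd E)) = fun y : ({0}ᶜ : Set E) => g (y : E) :=
    funext fun y => polar_comp_eq g y
  rw [hcomp]
  have h1 : Integrable g (Measure.map ((↑) : ({0}ᶜ : Set E) → E) (μ.comap (↑))) := by
    rw [map_comap_subtype_coe hs, restrict_compl_singleton]; exact hg
  exact ((MeasurableEmbedding.subtype_coe hs).integrable_map_iff).mp h1

theorem my_inner_polar_eq (g : E → ℝ) (ξ : sphere (0:E) 1) :
    (∫ r : Ioi (0:ℝ), g ((r : ℝ) • (ξ : E)) ∂(volumeIoiPow (Module.finrank ℝ E - 1)))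
      = ∫ r in Ioi (0:ℝ), r ^ (Module.finrank ℝ E - 1) • g (r • (ξ : E)) := by
  simp only [volumeIoiPow, ENNReal.ofReal]
  rw [integral_withDensity_eq_integral_smul ((measurable_subtype_coe.pow_const _).real_toNNReal),
    integral_subtype_comap measurableSet_Ioi
      (fun r : ℝ => (r ^ (Module.finrank ℝ E - 1)).toNNReal • g (r • (ξ : E)))]
  refine setIntegral_congr_fun measurableSet_Ioi fun r hr => ?_
  rw [NNReal.smul_def, Real.coe_toNNReal _ (pow_nonneg (le_of_lt hr) _)]

theorem my_integral_polar (g : E → ℝ) (hg : Integrable g μ) :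
    ∫ y, g y ∂μ = ∫ ξ : sphere (0:E) 1,
        (∫ r in Ioi (0:ℝ), r ^ (Module.finrank ℝ E - 1) • g (r • (ξ : E))) ∂μ.toSphere := by
  have hs : MeasurableSet ({0}ᶜ : Set E) := (measurableSet_singleton 0).compl
  calc ∫ y, g y ∂μ
      = ∫ y : ({0}ᶜ : Set E), g (y : E) ∂(μ.comap (↑)) := by
        rw [integral_subtype_comap hs, restrict_compl_singleton]
    _ = ∫ p : sphere (0:E) 1 × Ioi (0:ℝ), g ((p.2 : ℝ) • (p.1 : E))
          ∂(μ.toSphere.prod (volumeIoiPow (Module.finrank ℝ E - 1))) := by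
        rw [← μ.measurePreserving_homeomorphUnitSphereProd.integral_comp
          (Homeomorph.measurableEmbedding _) (fun p => g ((p.2 : ℝ) • (p.1 : E)))]
        exact integral_congr_ae (Filter.Eventually.of_forall fun y => (polar_comp_eq g y).symm)
    _ = ∫ ξ : sphere (0:E) 1, (∫ r : Ioi (0:ℝ), g ((r : ℝ) • (ξ : E))
          ∂(volumeIoiPow (Module.finrank ℝ E - 1))) ∂μ.toSphere :=
        integral_prod _ (my_integrable_polar_prod μ hg)
    _ = _ := integral_congr_ae (Filter.Eventually.of_forall fun ξ => my_inner_polar_eq g ξ)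

theorem my_integrable_polar_marginal (g : E → ℝ) (hg : Integrable g μ) :
    Integrable (fun ξ : sphere (0:E) 1 =>
        ∫ r in Ioi (0:ℝ), r ^ (Module.finrank ℝ E - 1) • g (r • (ξ : E))) μ.toSphere :=
  ((my_integrable_polar_prod μ hg).integral_prod_left).congr
    (Filter.Eventually.of_forall fun ξ => my_inner_polar_eq g ξ)

end PolarAux

section EuclideanAux

open Set Metric

lemma my_coord_abs_le_norm {n : ℕ} (y : EuclideanSpace ℝ (Fin n)) (l : Fin n) : |y l| ≤ ‖y‖ := by
  rw [EuclideanSpace.norm_eq]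
  have h1 : |y l| = Real.sqrt (‖y l‖ ^ 2) := by
    rw [Real.sqrt_sq_eq_abs, Real.norm_eq_abs, abs_abs]
  rw [h1]
  exact Real.sqrt_le_sqrt (Finset.single_le_sum (fun i _ => sq_nonneg ‖y i‖) (Finset.mem_univ l))

lemma my_prod_coord_abs_le {n k : ℕ} (y : EuclideanSpace ℝ (Fin n)) (i : Fin k → Fin n) :
    |∏ a, y (i a)| ≤ ‖y‖ ^ k := by
  rw [Finset.abs_prod]
  calc ∏ a, |y (i a)| ≤ ∏ _a : Fin k, ‖y‖ :=
        Finset.prod_le_prod (fun _ _ => abs_nonneg _) (fun a _ => my_coord_abs_le_norm y (i a))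
    _ = ‖y‖ ^ k := by rw [Finset.prod_const, Finset.card_univ, Fintype.card_fin]

lemma my_schwartz_decay_bound {n : ℕ} (f : SchwartzMap (EuclideanSpace ℝ (Fin n)) ℝ) :
    ∃ C : ℝ, 0 ≤ C ∧ ∀ z, ‖f z‖ ≤ C * ((1 + ‖z‖)⁻¹) ^ n := by
  refine ⟨2 ^ n * (Finset.Iic ((n : ℕ), (0 : ℕ))).sup
    (fun p => SchwartzMap.seminorm ℝ p.1 p.2) f, ?_, fun z => ?_⟩
  · positivity
  · have h := SchwartzMap.one_add_le_sup_seminorm_apply (𝕜 := ℝ) (m := (n, 0))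
      le_rfl le_rfl f z
    rw [norm_iteratedFDeriv_zero] at h
    have hpos : (0:ℝ) < (1 + ‖z‖) ^ n := by positivity
    rw [inv_pow, mul_comm, ← div_eq_inv_mul, le_div_iff₀ hpos, mul_comm]
    exact h

end EuclideanAux

open Set Metric in
/-- Lemma 4.2 of the paper: for a Schwartz symmetric `m`-tensor field
`f = (f_{j₁⋯j_m})` on `ℝⁿ` (components indexed by `j : Fin m → Fin n`, symmetric
under permutations of the indices), `0 < 2s < n`, and indices `i : Fin k → Fin n`,
the averaged fractional divergent beam ray transform
`∫_{S^{n-1}} ξ^{i₁}⋯ξ^{i_k} χ_{s,m}f(x,ξ) dS_ξ` equals `(-1)^{m+k}` times the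
convolution of `f_{j₁⋯j_m}` with the kernel
`|x|^{2s-n-m-k} x^{i₁}⋯x^{i_k} x^{j₁}⋯x^{j_m}` (summed over repeated indices). -/
theorem averaged_beam_transform_eq_convolution
    (n m k : ℕ) (hn : 2 ≤ n) (s : ℝ) (hs : 0 < s) (h2s : 2 * s < n)
    (f : (Fin m → Fin n) → SchwartzMap (EuclideanSpace ℝ (Fin n)) ℝ)
    (hsym : ∀ (σ : Equiv.Perm (Fin m)) (j : Fin m → Fin n), f (j ∘ σ) = f j)
    (i : Fin k → Fin n) (x : EuclideanSpace ℝ (Fin n)) :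
    (∫ ξ : Metric.sphere (0 : EuclideanSpace ℝ (Fin n)) 1,
        ((∏ a, (ξ : EuclideanSpace ℝ (Fin n)) (i a)) *
          ∑ j : Fin m → Fin n,
            ∫ t in Set.Ioi (0 : ℝ),
              t ^ (2 * s - 1) * f j (x + t • (ξ : EuclideanSpace ℝ (Fin n))) *
                ∏ b, (ξ : EuclideanSpace ℝ (Fin n)) (j b))
        ∂((volume : Measure (EuclideanSpace ℝ (Fin n))).toSphere))
      = (-1 : ℝ) ^ (m + k) *
          ∑ j : Fin m → Fin n,
            ∫ z : EuclideanSpace ℝ (Fin n),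
              ‖x - z‖ ^ (2 * s - n - m - k) *
                (∏ a, (x - z) (i a)) * (∏ b, (x - z) (j b)) * f j z := by
  classical
  haveI : Nonempty (Fin n) := ⟨⟨0, by omega⟩⟩
  haveI : Nontrivial (EuclideanSpace ℝ (Fin n)) := by
    refine ⟨EuclideanSpace.single ⟨0, by omega⟩ 1, 0, fun h => ?_⟩
    have := congrArg (fun v : EuclideanSpace ℝ (Fin n) => v ⟨0, by omega⟩) h
    simp [EuclideanSpace.single_apply] at this
  have hdim : Module.finrank ℝ (EuclideanSpace ℝ (Fin n)) = n := finrank_euclideanSpace_fin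
  set e : ℝ := 2 * s - n - m - k with he
  -- the components of the integrand after the substitution `z = x + y`
  set g : (Fin m → Fin n) → EuclideanSpace ℝ (Fin n) → ℝ :=
    fun j y => ‖y‖ ^ e * (∏ a, y (i a)) * (∏ b, y (j b)) * f j (x + y) with hgdef
  -- decay bound for the Schwartz components
  choose C hC0 hC using fun j => my_schwartz_decay_bound (f j)
  -- measurability
  have hmeasg : ∀ j, Measurable (g j) := by
    intro j
    have h1 : Measurable fun y : EuclideanSpace ℝ (Fin n) => ‖y‖ ^ e := by measurability
    have h2 : Measurable fun y : EuclideanSpace ℝ (Fin n) => ∏ a, y (i a) :=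
      Finset.measurable_prod _ (fun a _ => (EuclideanSpace.proj (i a)).continuous.measurable)
    have h3 : Measurable fun y : EuclideanSpace ℝ (Fin n) => ∏ b, y (j b) :=
      Finset.measurable_prod _ (fun b _ => (EuclideanSpace.proj (j b)).continuous.measurable)
    have h4 : Measurable fun y : EuclideanSpace ℝ (Fin n) => f j (x + y) :=
      ((f j).continuous.comp (continuous_const.add continuous_id)).measurable
    exact ((h1.mul h2).mul h3).mul h4
  -- exponent juggling
  have hexp : ∀ t : ℝ, 0 < t → t ^ (n - 1) * (t ^ e * t ^ k * t ^ m) = t ^ (2 * s - 1) := by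
    intro t ht
    rw [← Real.rpow_natCast t (n - 1), ← Real.rpow_natCast t k, ← Real.rpow_natCast t m,
      ← Real.rpow_add ht, ← Real.rpow_add ht, ← Real.rpow_add ht]
    congr 1
    have hcast : ((n - 1 : ℕ) : ℝ) = (n : ℝ) - 1 := by
      rw [Nat.cast_sub (by omega), Nat.cast_one]
    rw [hcast, he]; ring
  -- integrability of `g j`
  have hInt : ∀ j, Integrable (g j) volume := by
    intro j
    refine ⟨(hmeasg j).aestronglyMeasurable, ?_⟩
    rw [hasFiniteIntegral_def]
    have hlp := my_lintegral_polar (volume : Measure (EuclideanSpace ℝ (Fin n)))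
      (fun y => (‖g j y‖ₑ : ℝ≥0∞)) (hmeasg j).enorm
    rw [hdim] at hlp
    rw [hlp]
    set w : ℝ → ℝ := fun r => C j * (r ^ (2 * s - 1) * ((1 + max 0 (r - ‖x‖))⁻¹) ^ n) with hw
    have hwcont2 : Continuous fun r : ℝ => ((1 + max 0 (r - ‖x‖))⁻¹) ^ n := by
      refine ((continuous_const.add
        ((continuous_const.max (continuous_id.sub continuous_const)))).inv₀ ?_).pow n
      intro r
      have : (0:ℝ) < 1 + max 0 (r - ‖x‖) := by
        have := le_max_left (0:ℝ) (r - ‖x‖); linarith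
      exact ne_of_gt this
    have hwmeas : Measurable w := by
      have h1 : Measurable fun r : ℝ => r ^ (2 * s - 1) := by measurability
      exact (measurable_const.mul (h1.mul hwcont2.measurable))
    have hwnn : ∀ r ∈ Ioi (0:ℝ), 0 ≤ w r := by
      intro r hr
      have h1 : (0:ℝ) ≤ r ^ (2 * s - 1) := Real.rpow_nonneg (le_of_lt hr) _
      have h2 : (0:ℝ) ≤ ((1 + max 0 (r - ‖x‖))⁻¹) ^ n := by positivity
      exact mul_nonneg (hC0 j) (mul_nonneg h1 h2)
    -- integrability of the radial majorant
    have hR : (0:ℝ) < ‖x‖ + 1 := by positivity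
    have hwInt : IntegrableOn w (Ioi (0:ℝ)) volume := by
      have h1 : IntegrableOn w (Ioc (0:ℝ) (‖x‖ + 1)) volume := by
        have hbase : IntegrableOn (fun r : ℝ => C j * r ^ (2 * s - 1))
            (Ioc (0:ℝ) (‖x‖ + 1)) volume :=
          (intervalIntegral.intervalIntegrable_rpow' (by linarith)).1.const_mul (C j)
        refine hbase.mono' hwmeas.aestronglyMeasurable ?_
        filter_upwards [ae_restrict_mem measurableSet_Ioc] with r hr
        rw [Real.norm_eq_abs, abs_of_nonneg (hwnn r hr.1)]
        have hb : ((1 + max 0 (r - ‖x‖))⁻¹) ^ n ≤ 1 := by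
          refine pow_le_one₀ (by positivity) ?_
          refine inv_le_one_of_one_le₀ ?_
          have := le_max_left (0:ℝ) (r - ‖x‖); linarith
        calc C j * (r ^ (2 * s - 1) * ((1 + max 0 (r - ‖x‖))⁻¹) ^ n)
            ≤ C j * (r ^ (2 * s - 1) * 1) := by
              refine mul_le_mul_of_nonneg_left ?_ (hC0 j)
              exact mul_le_mul_of_nonneg_left hb (Real.rpow_nonneg hr.1.le _)
          _ = C j * r ^ (2 * s - 1) := by ring
      have h2 : IntegrableOn w (Ioi (‖x‖ + 1)) volume := by
        have hbase : IntegrableOn (fun r : ℝ => (C j * (‖x‖ + 1) ^ n) * r ^ (2 * s - 1 - n))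
            (Ioi (‖x‖ + 1)) volume := by
          refine (integrableOn_Ioi_rpow_of_lt ?_ hR).const_mul _
          have : (2:ℝ) ≤ n := by exact_mod_cast hn
          linarith
        refine hbase.mono' hwmeas.aestronglyMeasurable ?_
        filter_upwards [ae_restrict_mem measurableSet_Ioi] with r hr
        have hr' : ‖x‖ + 1 < r := hr
        have hr0 : (0:ℝ) < r := lt_trans hR hr'
        rw [Real.norm_eq_abs, abs_of_nonneg (hwnn r (mem_Ioi.mpr hr0))]
        have hmax : max 0 (r - ‖x‖) = r - ‖x‖ := max_eq_right (by linarith)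
        have hq : (1 + max 0 (r - ‖x‖))⁻¹ ≤ (‖x‖ + 1) * r⁻¹ := by
          rw [hmax]
          have hd : (0:ℝ) < r / (‖x‖ + 1) := by positivity
          have hle : r / (‖x‖ + 1) ≤ 1 + (r - ‖x‖) := by
            rw [div_le_iff₀ hR]
            nlinarith [norm_nonneg x]
          calc (1 + (r - ‖x‖))⁻¹ ≤ (r / (‖x‖ + 1))⁻¹ := by
                exact inv_anti₀ hd hle
            _ = (‖x‖ + 1) * r⁻¹ := by rw [inv_div]; ring
        have hqn : ((1 + max 0 (r - ‖x‖))⁻¹) ^ n ≤ ((‖x‖ + 1) * r⁻¹) ^ n := by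
          exact pow_le_pow_left₀ (by positivity) hq n
        calc w r ≤ C j * (r ^ (2 * s - 1) * ((‖x‖ + 1) * r⁻¹) ^ n) := by
              refine mul_le_mul_of_nonneg_left ?_ (hC0 j)
              exact mul_le_mul_of_nonneg_left hqn (Real.rpow_nonneg hr0.le _)
          _ = (C j * (‖x‖ + 1) ^ n) * (r ^ (2 * s - 1) * (r⁻¹) ^ n) := by
              rw [mul_pow]; ring
          _ = (C j * (‖x‖ + 1) ^ n) * r ^ (2 * s - 1 - n) := by
              congr 1
              rw [← Real.rpow_natCast r⁻¹ n, ← Real.rpow_neg_one r,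
                ← Real.rpow_mul hr0.le, ← Real.rpow_add hr0]
              congr 1
              ring
      rw [← Ioc_union_Ioi_eq_Ioi hR.le]
      exact h1.union h2
    -- pointwise bound and conclusion
    have hbnd : ∀ ξ : sphere (0 : EuclideanSpace ℝ (Fin n)) 1,
        (∫⁻ r in Ioi (0:ℝ), ENNReal.ofReal (r ^ (n - 1)) *
          (‖g j (r • (ξ : EuclideanSpace ℝ (Fin n)))‖₊ : ℝ≥0∞))
          ≤ ∫⁻ r in Ioi (0:ℝ), ENNReal.ofReal (w r) := by
      intro ξ
      refine setLIntegral_mono (hwmeas.ennreal_ofReal) ?_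
      intro r hr
      have hr0 : (0:ℝ) < r := hr
      have hnormξ : ‖(ξ : EuclideanSpace ℝ (Fin n))‖ = 1 := mem_sphere_zero_iff_norm.mp ξ.2
      set y : EuclideanSpace ℝ (Fin n) := r • (ξ : EuclideanSpace ℝ (Fin n)) with hy
      have hyr : ‖y‖ = r := by
        rw [hy, norm_smul, hnormξ, mul_one, Real.norm_eq_abs, abs_of_pos hr0]
      rw [show ((‖g j y‖₊ : ℝ≥0∞)) = ENNReal.ofReal ‖g j y‖ from (ofReal_norm _).symm, ← ENNReal.ofReal_mul (by positivity)]
      refine ENNReal.ofReal_le_ofReal ?_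
      -- real inequality
      have hb1 : ‖g j y‖ ≤ r ^ e * r ^ k * r ^ m * ‖f j (x + y)‖ := by
        rw [hgdef]
        simp only [Real.norm_eq_abs]
        rw [abs_mul, abs_mul, abs_mul, abs_of_nonneg (Real.rpow_nonneg (norm_nonneg _) _), hyr]
        have hpi : |∏ a, y (i a)| ≤ r ^ k := by
          have := my_prod_coord_abs_le y i; rwa [hyr] at this
        have hpj : |∏ b, y (j b)| ≤ r ^ m := by
          have := my_prod_coord_abs_le y j; rwa [hyr] at this
        gcongr
      have hb2 : ‖f j (x + y)‖ ≤ C j * ((1 + max 0 (r - ‖x‖))⁻¹) ^ n := by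
        refine le_trans (hC j (x + y)) ?_
        have hle : max 0 (r - ‖x‖) ≤ ‖x + y‖ := by
          refine max_le (norm_nonneg _) ?_
          have h1 : ‖y‖ ≤ ‖x + y‖ + ‖x‖ := by
            calc ‖y‖ = ‖(x + y) - x‖ := by congr 1; abel
              _ ≤ ‖x + y‖ + ‖x‖ := norm_sub_le _ _
          rw [hyr] at h1; linarith
        have hpos : (0:ℝ) < 1 + max 0 (r - ‖x‖) := by
          have := le_max_left (0:ℝ) (r - ‖x‖); linarith
        gcongr
        exact hC0 j
      calc r ^ (n - 1) * ‖g j y‖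
          ≤ r ^ (n - 1) * (r ^ e * r ^ k * r ^ m *
              (C j * ((1 + max 0 (r - ‖x‖))⁻¹) ^ n)) := by
            refine mul_le_mul_of_nonneg_left ?_ (pow_nonneg hr0.le _)
            refine le_trans hb1 ?_
            exact mul_le_mul_of_nonneg_left hb2 (by positivity)
        _ = (r ^ (n - 1) * (r ^ e * r ^ k * r ^ m)) *
              (C j * ((1 + max 0 (r - ‖x‖))⁻¹) ^ n) := by ring
        _ = w r := by rw [hexp r hr0, hw]; ring
    calc (∫⁻ ξ : sphere (0 : EuclideanSpace ℝ (Fin n)) 1,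
          (∫⁻ r in Ioi (0:ℝ), ENNReal.ofReal (r ^ (n - 1)) *
            (‖g j (r • (ξ : EuclideanSpace ℝ (Fin n)))‖₊ : ℝ≥0∞))
          ∂(volume : Measure (EuclideanSpace ℝ (Fin n))).toSphere)
        ≤ ∫⁻ _ξ : sphere (0 : EuclideanSpace ℝ (Fin n)) 1,
            (∫⁻ r in Ioi (0:ℝ), ENNReal.ofReal (w r))
          ∂(volume : Measure (EuclideanSpace ℝ (Fin n))).toSphere :=
          lintegral_mono fun ξ => hbnd ξ
      _ = (∫⁻ r in Ioi (0:ℝ), ENNReal.ofReal (w r)) *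
            ((volume : Measure (EuclideanSpace ℝ (Fin n))).toSphere Set.univ) :=
          lintegral_const _
      _ < ⊤ := by
          refine ENNReal.mul_lt_top ?_ (measure_lt_top _ _)
          have hfin := hwInt.2
          rw [hasFiniteIntegral_def] at hfin
          refine lt_of_le_of_lt ?_ hfin
          refine lintegral_mono fun r => ?_
          exact Real.ofReal_le_enorm (w r)
  -- pointwise identity on the sphere
  have hsphere_pt : ∀ (j : Fin m → Fin n) (ξ : sphere (0 : EuclideanSpace ℝ (Fin n)) 1),
      (∏ a, (ξ : EuclideanSpace ℝ (Fin n)) (i a)) *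
        (∫ t in Ioi (0:ℝ), t ^ (2 * s - 1) * f j (x + t • (ξ : EuclideanSpace ℝ (Fin n))) *
          ∏ b, (ξ : EuclideanSpace ℝ (Fin n)) (j b))
        = ∫ r in Ioi (0:ℝ), r ^ (n - 1) • g j (r • (ξ : EuclideanSpace ℝ (Fin n))) := by
    intro j ξ
    rw [← integral_const_mul]
    refine setIntegral_congr_fun measurableSet_Ioi fun t ht => ?_
    have ht0 : (0:ℝ) < t := ht
    have hnormξ : ‖(ξ : EuclideanSpace ℝ (Fin n))‖ = 1 := mem_sphere_zero_iff_norm.mp ξ.2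
    have hts : ‖t • (ξ : EuclideanSpace ℝ (Fin n))‖ = t := by
      rw [norm_smul, hnormξ, mul_one, Real.norm_eq_abs, abs_of_pos ht0]
    have hp1 : (∏ a, (t • (ξ : EuclideanSpace ℝ (Fin n))) (i a))
        = t ^ k * ∏ a, (ξ : EuclideanSpace ℝ (Fin n)) (i a) := by
      simp only [PiLp.smul_apply, smul_eq_mul]
      rw [Finset.prod_mul_distrib, Finset.prod_const, Finset.card_univ, Fintype.card_fin]
    have hp2 : (∏ b, (t • (ξ : EuclideanSpace ℝ (Fin n))) (j b))
        = t ^ m * ∏ b, (ξ : EuclideanSpace ℝ (Fin n)) (j b) := by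
      simp only [PiLp.smul_apply, smul_eq_mul]
      rw [Finset.prod_mul_distrib, Finset.prod_const, Finset.card_univ, Fintype.card_fin]
    rw [hgdef]
    simp only [smul_eq_mul]
    rw [hts, hp1, hp2, ← hexp t ht0]
    ring
  -- change of variables for the right-hand side
  have hconv : ∀ j : Fin m → Fin n,
      (∫ z : EuclideanSpace ℝ (Fin n),
        ‖x - z‖ ^ e * (∏ a, (x - z) (i a)) * (∏ b, (x - z) (j b)) * f j z)
        = (-1 : ℝ) ^ (m + k) * ∫ y, g j y := by
    intro j
    have h1 : (∫ z : EuclideanSpace ℝ (Fin n),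
        ‖x - z‖ ^ e * (∏ a, (x - z) (i a)) * (∏ b, (x - z) (j b)) * f j z)
        = ∫ y : EuclideanSpace ℝ (Fin n),
            ‖x - (x + y)‖ ^ e * (∏ a, (x - (x + y)) (i a)) * (∏ b, (x - (x + y)) (j b)) *
              f j (x + y) :=
      (integral_add_left_eq_self (fun z : EuclideanSpace ℝ (Fin n) =>
        ‖x - z‖ ^ e * (∏ a, (x - z) (i a)) * (∏ b, (x - z) (j b)) * f j z) x).symm
    rw [h1, ← integral_const_mul]
    refine integral_congr_ae (Filter.Eventually.of_forall fun y => ?_)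
    dsimp only
    have hxy : x - (x + y) = -y := by abel
    rw [hxy, hgdef]
    have hnp1 : (∏ a, (-y : EuclideanSpace ℝ (Fin n)) (i a))
        = (-1 : ℝ) ^ k * ∏ a, y (i a) := by
      simp only [PiLp.neg_apply]
      rw [show ∀ (u : Fin k → ℝ), (∏ a, -(u a)) = ∏ a, (-1 : ℝ) * u a from
        fun u => Finset.prod_congr rfl fun a _ => by ring]
      rw [Finset.prod_mul_distrib, Finset.prod_const, Finset.card_univ, Fintype.card_fin]
    have hnp2 : (∏ b, (-y : EuclideanSpace ℝ (Fin n)) (j b))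
        = (-1 : ℝ) ^ m * ∏ b, y (j b) := by
      simp only [PiLp.neg_apply]
      rw [show ∀ (u : Fin m → ℝ), (∏ a, -(u a)) = ∏ a, (-1 : ℝ) * u a from
        fun u => Finset.prod_congr rfl fun a _ => by ring]
      rw [Finset.prod_mul_distrib, Finset.prod_const, Finset.card_univ, Fintype.card_fin]
    rw [norm_neg, hnp1, hnp2, pow_add]
    ring
  -- polar coordinates, specialized
  have hpolar : ∀ j : Fin m → Fin n,
      ∫ y, g j y = ∫ ξ : sphere (0 : EuclideanSpace ℝ (Fin n)) 1,
        (∫ r in Ioi (0:ℝ), r ^ (n - 1) • g j (r • (ξ : EuclideanSpace ℝ (Fin n))))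
        ∂(volume : Measure (EuclideanSpace ℝ (Fin n))).toSphere := by
    intro j
    have := my_integral_polar (volume : Measure (EuclideanSpace ℝ (Fin n))) (g j) (hInt j)
    rwa [hdim] at this
  have hmarg : ∀ j : Fin m → Fin n,
      Integrable (fun ξ : sphere (0 : EuclideanSpace ℝ (Fin n)) 1 =>
        ∫ r in Ioi (0:ℝ), r ^ (n - 1) • g j (r • (ξ : EuclideanSpace ℝ (Fin n))))
        (volume : Measure (EuclideanSpace ℝ (Fin n))).toSphere := by
    intro j
    have := my_integrable_polar_marginal (volume : Measure (EuclideanSpace ℝ (Fin n)))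
      (g j) (hInt j)
    rwa [hdim] at this
  -- put everything together
  calc (∫ ξ : sphere (0 : EuclideanSpace ℝ (Fin n)) 1,
        ((∏ a, (ξ : EuclideanSpace ℝ (Fin n)) (i a)) *
          ∑ j : Fin m → Fin n,
            ∫ t in Ioi (0 : ℝ),
              t ^ (2 * s - 1) * f j (x + t • (ξ : EuclideanSpace ℝ (Fin n))) *
                ∏ b, (ξ : EuclideanSpace ℝ (Fin n)) (j b))
        ∂((volume : Measure (EuclideanSpace ℝ (Fin n))).toSphere))
      = ∫ ξ : sphere (0 : EuclideanSpace ℝ (Fin n)) 1,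
          (∑ j : Fin m → Fin n,
            ∫ r in Ioi (0:ℝ), r ^ (n - 1) • g j (r • (ξ : EuclideanSpace ℝ (Fin n))))
          ∂((volume : Measure (EuclideanSpace ℝ (Fin n))).toSphere) := by
        refine integral_congr_ae (Filter.Eventually.of_forall fun ξ => ?_)
        dsimp only
        rw [Finset.mul_sum]
        exact Finset.sum_congr rfl fun j _ => hsphere_pt j ξ
    _ = ∑ j : Fin m → Fin n, ∫ ξ : sphere (0 : EuclideanSpace ℝ (Fin n)) 1,
          (∫ r in Ioi (0:ℝ), r ^ (n - 1) • g j (r • (ξ : EuclideanSpace ℝ (Fin n))))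
          ∂((volume : Measure (EuclideanSpace ℝ (Fin n))).toSphere) :=
        integral_finset_sum _ (fun j _ => hmarg j)
    _ = ∑ j : Fin m → Fin n, ∫ y, g j y :=
        Finset.sum_congr rfl fun j _ => (hpolar j).symm
    _ = (-1 : ℝ) ^ (m + k) *
          ∑ j : Fin m → Fin n,
            ∫ z : EuclideanSpace ℝ (Fin n),
              ‖x - z‖ ^ e *
                (∏ a, (x - z) (i a)) * (∏ b, (x - z) (j b)) * f j z := by
        rw [Finset.mul_sum]
        refine Finset.sum_congr rfl fun j _ => ?_
        rw [hconv j, ← mul_assoc, ← pow_add]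
        rw [Even.neg_one_pow ⟨m + k, rfl⟩, one_mul]
end
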